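/- Let $k$ be an algebraically closed field of characteristic zero, $a \geq 1$, and consider the Fermat-type polynomial $f = \prod_{0 \leq i < j \leq n}(x_i^a - x_j^a) \in k[x_0,\dots,x_n]$. Then for each $m = 1, \dots, n$ the derivation $\theta_m = \sum_{i=0}^n x_i^{(m-1)a+1} \partial_{x_i}$ satisfies $\theta_m(f) \in (f)$. -/

import Mathlib

/-!
`θₘ` sends `xᵢᵃ` to `a (xᵢᵃ)ᵐ`, so `θₘ(xᵢᵃ - xⱼᵃ) = a ((xᵢᵃ)ᵐ - (xⱼᵃ)ᵐ)` is a multiple of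
`xᵢᵃ - xⱼᵃ`. By the Leibniz rule, a derivation preserves the principal ideal of a product of
factors whose principal ideals it preserves.
-/

open MvPolynomial Finset

theorem Derivation.prod_dvd_apply_prod {R A ι : Type*} [CommSemiring R] [CommSemiring A]
    [Algebra R A] (D : Derivation R A A) (s : Finset ι) (g : ι → A)
    (h : ∀ i ∈ s, g i ∣ D (g i)) :
    (∏ i ∈ s, g i) ∣ D (∏ i ∈ s, g i) := by
  classical
  induction s using Finset.induction with
  | empty => simp
  | @insert i s hi ih =>
    rw [prod_insert hi, Derivation.leibniz, smul_eq_mul, smul_eq_mul]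
    have hs : (∏ j ∈ s, g j) ∣ D (∏ j ∈ s, g j) := ih fun j hj => h j (mem_insert_of_mem hj)
    have hi' : g i ∣ D (g i) := h i (mem_insert_self i s)
    exact dvd_add (mul_dvd_mul_left _ hs) (mul_comm (g i) _ ▸ mul_dvd_mul_left _ hi')

section

variable {σ R : Type*}

theorem mkDerivation_X_pow_mul_add_one_X_pow [CommSemiring R] (e a : ℕ) (j : σ) :
    mkDerivation R (fun i => (X i : MvPolynomial σ R) ^ (e * a + 1)) (X j ^ a) =
      a • (X j ^ a) ^ (e + 1) := by
  rw [Derivation.leibniz_pow, mkDerivation_X, smul_eq_mul]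
  rcases a with _ | b
  · simp
  · rw [Nat.add_sub_cancel]
    ring

theorem X_pow_sub_X_pow_dvd_mkDerivation [CommRing R] (e a : ℕ) (i j : σ) :
    (X i ^ a - X j ^ a : MvPolynomial σ R) ∣
      mkDerivation R (fun l => (X l : MvPolynomial σ R) ^ (e * a + 1)) (X i ^ a - X j ^ a) := by
  rw [map_sub, mkDerivation_X_pow_mul_add_one_X_pow, mkDerivation_X_pow_mul_add_one_X_pow,
    ← smul_sub, nsmul_eq_mul]
  exact (sub_dvd_pow_sub_pow _ _ _).mul_left _

end

theorem fermat_arrangement_derivations_general {k : Type*} [Field k]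
    {n : ℕ} (a : ℕ)
    (f : MvPolynomial (Fin (n + 1)) k)
    (hf : f = ∏ p ∈ univ.filter (fun p : Fin (n + 1) × Fin (n + 1) => p.1 < p.2),
      ((X p.1) ^ a - (X p.2) ^ a))
    (m : ℕ) :
    (mkDerivation k (fun i : Fin (n + 1) => (X i) ^ ((m - 1) * a + 1))) f
      ∈ Ideal.span {f} := by
  rw [Ideal.mem_span_singleton, hf]
  exact Derivation.prod_dvd_apply_prod _ _ _
    fun p _ => X_pow_sub_X_pow_dvd_mkDerivation (m - 1) a p.1 p.2

/-- For the Fermat-type polynomial `f = ∏_{i<j}(xᵢᵃ - xⱼᵃ)`, the derivations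
`θₘ = ∑ xᵢ^{(m-1)a+1} ∂ᵢ`, `1 ≤ m ≤ n`, are logarithmic. -/
theorem fermat_arrangement_derivations {k : Type*} [Field k] [IsAlgClosed k] [CharZero k]
    {n : ℕ} (a : ℕ) (ha : 1 ≤ a)
    (f : MvPolynomial (Fin (n + 1)) k)
    (hf : f = ∏ p ∈ univ.filter (fun p : Fin (n + 1) × Fin (n + 1) => p.1 < p.2),
      ((X p.1) ^ a - (X p.2) ^ a))
    (m : ℕ) (hm1 : 1 ≤ m) (hmn : m ≤ n) :
    (mkDerivation k (fun i : Fin (n + 1) => (X i) ^ ((m - 1) * a + 1))) f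
      ∈ Ideal.span {f} :=
  fermat_arrangement_derivations_general a f hf m
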